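/- arXiv:math/0602400 — 5 statements merged into one kernel-verified Lean document; each statement's English description precedes it below -/
import Mathlib

section
/- Let V be a finite-dimensional vector space over ℂ with a nondegenerate symmetric bilinear form b, let n = dim V, and let s be a positive integer with s ≤ n. Then the tensors T_M ∈ V^{⊗2s}, where M ranges over all perfect matchings of {1,…,2s}, are linearly independent over ℂ. -/
/-!
Contracting `T_σ` against the functional `x ↦ ∏ᵢ B (xᵢ, yᵢ)` on `V^{⊗2s}` contracts one Casimir
element per block, giving `∏ B (y_i, y_{σ i})` over the blocks `{i, σ i}` of `σ`. Over `ℂ` a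
nondegenerate symmetric form has an orthonormal family `w` of size `n = dim V`. Given a matching
`τ`, label its `s ≤ n` blocks by distinct indices `a`, and take `y = w ∘ a`: the block product for
`σ` is then `1` if every block of `σ` is a block of `τ`, and `0` otherwise. These functionals are
therefore dual to the family `(T_σ)`, which is thus linearly independent.
-/

open scoped TensorProduct

/-- A perfect matching of `{1,…,m}`, encoded as a fixed-point-free involution of `Fin m`:
the blocks of the matching are the pairs `{i, σ i}`. -/
abbrev PerfectMatching (m : ℕ) : Type :=
  {σ : Equiv.Perm (Fin m) // ∀ i, σ (σ i) = i ∧ σ i ≠ i}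

/-- The tensor `T_M ∈ V^{⊗2s}` attached to a perfect matching `M` (given as a fixed-point-free
involution `σ` of `Fin (2*s)`): a copy of the Casimir element `t = ∑ₖ eₖ ⊗ fₖ` of the bilinear
form (where `(eₖ)`, `(fₖ)` are dual bases) is placed in the pair of slots `{i, σ i}` for each
block of `M`, the factor `e` going to the smaller slot and `f` to the larger one. -/
noncomputable def matchingTensor {V : Type*} [AddCommGroup V] [Module ℂ V]
    {ι : Type*} [Fintype ι] [DecidableEq ι] (e f : ι → V) {s : ℕ}
    (σ : Equiv.Perm (Fin (2 * s))) : ⨂[ℂ] _ : Fin (2 * s), V :=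
  ∑ h : Fin (2 * s) → ι,
    if h ∘ ⇑σ = h then
      PiTensorProduct.tprod ℂ (fun i => if i < σ i then e (h i) else f (h i))
    else 0

open Finset

namespace Equiv.Perm

variable {α : Type*} [LinearOrder α] {σ : Equiv.Perm α}

lemma min_apply_apply (hσ : Function.Involutive σ) (i : α) :
    min (σ i) (σ (σ i)) = min i (σ i) := by
  rw [hσ i, min_comm]

lemma min_apply_eq_min_apply_iff (hσ : Function.Involutive σ) {i j : α} :
    min i (σ i) = min j (σ j) ↔ j = i ∨ j = σ i := by
  constructor
  · intro h
    rcases min_choice i (σ i) with hi | hi <;> rcases min_choice j (σ j) with hj | hj <;>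
      rw [hi, hj] at h
    · exact Or.inl h.symm
    · exact Or.inr (by rw [h, hσ j])
    · exact Or.inr h.symm
    · exact Or.inl (σ.injective h).symm
  · rintro (rfl | rfl)
    · rfl
    · exact (min_apply_apply hσ i).symm

variable [Fintype α]

def lowerEnds (σ : Equiv.Perm α) : Finset α := {i | i < σ i}

@[simp]
lemma mem_lowerEnds {i : α} : i ∈ lowerEnds σ ↔ i < σ i := by simp [lowerEnds]

lemma apply_mem_lowerEnds_iff (hσ : ∀ i, σ (σ i) = i ∧ σ i ≠ i) (i : α) :
    σ i ∈ lowerEnds σ ↔ i ∉ lowerEnds σ := by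
  rw [mem_lowerEnds, mem_lowerEnds, (hσ i).1, not_lt, (hσ i).2.le_iff_lt]

lemma min_apply_mem_lowerEnds (hσ : ∀ i, σ (σ i) = i ∧ σ i ≠ i) (i : α) :
    min i (σ i) ∈ lowerEnds σ := by
  rcases (hσ i).2.lt_or_gt with h | h
  · rw [min_eq_right h.le, apply_mem_lowerEnds_iff hσ, mem_lowerEnds, not_lt]
    exact h.le
  · rwa [min_eq_left h.le, mem_lowerEnds]

@[to_additive]
lemma prod_eq_prod_lowerEnds {M : Type*} [CommMonoid M] (hσ : ∀ i, σ (σ i) = i ∧ σ i ≠ i)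
    (g : α → M) : ∏ i, g i = ∏ i ∈ lowerEnds σ, g i * g (σ i) := by
  rw [prod_mul_distrib, ← prod_mul_prod_compl (lowerEnds σ)]
  congr 1
  refine prod_nbij' σ σ (fun i hi => (apply_mem_lowerEnds_iff hσ i).2 (mem_compl.1 hi))
    (fun i hi => mem_compl.2 fun h => (apply_mem_lowerEnds_iff hσ i).1 h hi)
    (fun i _ => (hσ i).1) (fun i _ => (hσ i).1) fun i _ => by rw [(hσ i).1]

lemma two_mul_card_lowerEnds (hσ : ∀ i, σ (σ i) = i ∧ σ i ≠ i) :
    2 * #(lowerEnds σ) = Fintype.card α := by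
  simpa [mul_comm] using (sum_eq_sum_lowerEnds hσ fun _ => (1 : ℕ)).symm

def invariantFunEquiv (hσ : ∀ i, σ (σ i) = i ∧ σ i ≠ i) (β : Type*) :
    {h : α → β // h ∘ σ = h} ≃ (lowerEnds σ → β) where
  toFun h i := h.1 i
  invFun p := ⟨fun i => p ⟨min i (σ i), min_apply_mem_lowerEnds hσ i⟩,
    funext fun i => by simp only [Function.comp_apply, min_apply_apply fun i => (hσ i).1]⟩
  left_inv h := by
    ext i
    rcases min_choice i (σ i) with hm | hm <;> simp [hm, ← congrFun h.2 i]
  right_inv p := funext fun i => congrArg p (Subtype.ext (min_eq_left (mem_lowerEnds.1 i.2).le))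

lemma sum_invariant_prod_lowerEnds {β R : Type*} [Fintype β] [DecidableEq β] [CommSemiring R]
    (hσ : ∀ i, σ (σ i) = i ∧ σ i ≠ i) (Q : α → β → R) :
    ∑ h : α → β with h ∘ σ = h, ∏ i ∈ lowerEnds σ, Q i (h i) =
      ∏ i ∈ lowerEnds σ, ∑ k, Q i k := by
  rw [sum_subtype _ fun h => by rw [mem_filter, and_iff_right (mem_univ h)],
    ← prod_coe_sort, Fintype.prod_sum]
  exact Fintype.sum_equiv (invariantFunEquiv hσ β) _ _ fun h => (prod_coe_sort _ _).symm

lemma exists_blockLabel {κ : Type*} [Fintype κ] (hσ : ∀ i, σ (σ i) = i ∧ σ i ≠ i)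
    (hcard : Fintype.card α ≤ 2 * Fintype.card κ) :
    ∃ a : α → κ, ∀ i j, a i = a j ↔ j = i ∨ j = σ i := by
  obtain ⟨emb⟩ : Nonempty (lowerEnds σ ↪ κ) := Function.Embedding.nonempty_of_card_le <| by
    rw [Fintype.card_coe]
    have := two_mul_card_lowerEnds hσ
    omega
  exact ⟨fun i => emb ⟨min i (σ i), min_apply_mem_lowerEnds hσ i⟩, fun i j => by
    rw [emb.injective.eq_iff, Subtype.mk.injEq,
      min_apply_eq_min_apply_iff fun i => (hσ i).1]⟩

lemma eq_of_forall_mem_lowerEnds (hσ : ∀ i, σ (σ i) = i ∧ σ i ≠ i) {τ : Equiv.Perm α}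
    (hτ : Function.Involutive τ) (h : ∀ i ∈ lowerEnds σ, σ i = τ i) : σ = τ := by
  ext i
  by_cases hi : i ∈ lowerEnds σ
  · exact h i hi
  · have := congrArg τ (h (σ i) ((apply_mem_lowerEnds_iff hσ i).2 hi))
    rwa [(hσ i).1, hτ, eq_comm] at this

end Equiv.Perm

namespace PiTensorProduct

variable {R M α : Type*} [CommSemiring R] [AddCommMonoid M] [Module R M] [Fintype α]

noncomputable def pairing (B : LinearMap.BilinForm R M) (y : α → M) :
    (⨂[R] _ : α, M) →ₗ[R] R :=
  lift ((MultilinearMap.mkPiAlgebra R α R).compLinearMap fun i => B.flip (y i))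

@[simp]
lemma pairing_tprod (B : LinearMap.BilinForm R M) (y x : α → M) :
    pairing B y (tprod R x) = ∏ i, B (x i) (y i) := by
  simp [pairing]

end PiTensorProduct

namespace LinearMap.BilinForm

lemma sum_apply_mul_apply_of_dual {R V ι : Type*} [CommSemiring R] [AddCommMonoid V]
    [Module R V] [Fintype ι] [DecidableEq ι] (B : LinearMap.BilinForm R V)
    (e f : Module.Basis ι R V) (hdual : ∀ k l, B (e k) (f l) = if k = l then 1 else 0)
    (x z : V) : ∑ k, B (e k) x * B (f k) z = B x z := by
  have hcoord : ∀ k, B (e k) = f.coord k := fun k =>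
    f.ext fun l => by simp [hdual, Finsupp.single_apply, eq_comm]
  calc ∑ k, B (e k) x * B (f k) z = B (∑ k, f.repr x k • f k) z := by
        simp only [map_sum, map_smul, LinearMap.sum_apply, LinearMap.smul_apply, smul_eq_mul,
          hcoord, Module.Basis.coord_apply]
    _ = B x z := by rw [f.sum_repr]

lemma exists_orthonormal {K V : Type*} [Field K] [IsAlgClosed K] [Invertible (2 : K)]
    [AddCommGroup V] [Module K V] [FiniteDimensional K V] {B : LinearMap.BilinForm K V}
    (hB : B.IsSymm) (hBnd : B.Nondegenerate) :
    ∃ w : Fin (Module.finrank K V) → V, ∀ a b, B (w a) (w b) = if a = b then 1 else 0 := by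
  obtain ⟨v, hv⟩ := exists_orthogonal_basis (isSymm_iff.1 hB)
  choose z hz using fun i => IsAlgClosed.exists_eq_mul_self (B (v i) (v i))
  have hz0 : ∀ i, z i ≠ 0 := fun i h =>
    iIsOrtho.not_isOrtho_basis_self_of_nondegenerate hv hBnd i (by rw [hz, h, zero_mul])
  refine ⟨fun i => (z i)⁻¹ • v i, fun a b => ?_⟩
  obtain rfl | hab := eq_or_ne a b
  · simp [hz, hz0]
  · simp [hab, hv hab]

end LinearMap.BilinForm

open PiTensorProduct Equiv.Perm

section MatchingTensor

variable {V ι : Type*} [AddCommGroup V] [Module ℂ V] [Fintype ι] [DecidableEq ι]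
  {B : LinearMap.BilinForm ℂ V} {e f : Module.Basis ι ℂ V} {s : ℕ}
  {σ : Equiv.Perm (Fin (2 * s))}

lemma pairing_matchingTensor (hdual : ∀ k l, B (e k) (f l) = if k = l then 1 else 0)
    (hσ : ∀ i, σ (σ i) = i ∧ σ i ≠ i) (y : Fin (2 * s) → V) :
    pairing B y (matchingTensor e f σ) = ∏ i ∈ lowerEnds σ, B (y i) (y (σ i)) := by
  rw [matchingTensor, map_sum]
  simp_rw [apply_ite (pairing B y), map_zero, pairing_tprod]
  rw [← Finset.sum_filter]
  calc _ = ∑ h : Fin (2 * s) → ι with h ∘ σ = h,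
        ∏ i ∈ lowerEnds σ, B (e (h i)) (y i) * B (f (h i)) (y (σ i)) := by
        refine Finset.sum_congr rfl fun h hh => ?_
        rw [prod_eq_prod_lowerEnds hσ]
        refine Finset.prod_congr rfl fun i hi => ?_
        have hσi : ¬ σ i < σ (σ i) := fun hlt =>
          (apply_mem_lowerEnds_iff hσ i).1 (mem_lowerEnds.2 hlt) hi
        have hσh : h (σ i) = h i := congrFun (Finset.mem_filter.1 hh).2 i
        simp [mem_lowerEnds.1 hi, hσi, hσh]
    _ = ∏ i ∈ lowerEnds σ, ∑ k, B (e k) (y i) * B (f k) (y (σ i)) :=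
        sum_invariant_prod_lowerEnds hσ fun i k => B (e k) (y i) * B (f k) (y (σ i))
    _ = _ := Finset.prod_congr rfl fun i _ => B.sum_apply_mul_apply_of_dual e f hdual _ _

lemma pairing_matchingTensor_eq_ite {κ : Type*} [DecidableEq κ]
    (hdual : ∀ k l, B (e k) (f l) = if k = l then 1 else 0)
    {w : κ → V} (hw : ∀ a b, B (w a) (w b) = if a = b then 1 else 0)
    (hσ : ∀ i, σ (σ i) = i ∧ σ i ≠ i) {τ : Equiv.Perm (Fin (2 * s))}
    (hτ : Function.Involutive τ) {a : Fin (2 * s) → κ}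
    (ha : ∀ i j, a i = a j ↔ j = i ∨ j = τ i) :
    pairing B (w ∘ a) (matchingTensor e f σ) = if σ = τ then 1 else 0 := by
  have hlabel : ∀ i, a i = a (σ i) ↔ σ i = τ i := fun i => by rw [ha, or_iff_right (hσ i).2]
  rw [pairing_matchingTensor hdual hσ]
  simp only [Function.comp_apply, hw]
  rw [Finset.prod_boole]
  congr 1
  exact propext ⟨fun h => eq_of_forall_mem_lowerEnds hσ hτ fun i hi => (hlabel i).1 (h i hi),
    fun h i _ => (hlabel i).2 (h ▸ rfl)⟩

end MatchingTensor

theorem matchingTensors_linearIndependent_general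
    {V : Type*} [AddCommGroup V] [Module ℂ V] [FiniteDimensional ℂ V]
    (B : LinearMap.BilinForm ℂ V)
    (hBsymm : ∀ x y, B x y = B y x)
    (hBnd : B.Nondegenerate)
    {ι : Type*} [Fintype ι] [DecidableEq ι]
    (e f : Module.Basis ι ℂ V)
    (hdual : ∀ k l, B (e k) (f l) = if k = l then 1 else 0)
    (s : ℕ) (hsn : s ≤ Module.finrank ℂ V) :
    LinearIndependent ℂ
      (fun M : PerfectMatching (2 * s) => matchingTensor (⇑e) (⇑f) M.1) := by
  obtain ⟨w, hw⟩ := LinearMap.BilinForm.exists_orthonormal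
    (LinearMap.BilinForm.isSymm_def.2 hBsymm) hBnd
  choose a ha using fun τ : PerfectMatching (2 * s) =>
    exists_blockLabel (κ := Fin (Module.finrank ℂ V)) τ.2 (by simpa using hsn)
  have hpair : ∀ σ τ : PerfectMatching (2 * s),
      pairing B (w ∘ a τ) (matchingTensor e f σ.1) = if σ = τ then 1 else 0 := fun σ τ => by
    rw [pairing_matchingTensor_eq_ite hdual hw σ.2 (fun i => (τ.2 i).1) (ha τ)]
    exact if_congr Subtype.ext_iff.symm rfl rfl
  exact .of_pairwise_dual_eq_zero_one _ (fun τ => pairing B (w ∘ a τ))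
    (fun τ σ hne => by simp [hpair, hne.symm]) fun τ => by simp [hpair]

/-- Let `V` be a finite-dimensional vector space over `ℂ` with a nondegenerate symmetric
bilinear form `b`, let `n = dim V`, and let `s` be a positive integer with `s ≤ n`. Then the
tensors `T_M ∈ V^{⊗2s}`, where `M` ranges over all perfect matchings of `{1,…,2s}`, are
linearly independent over `ℂ`. -/
theorem matchingTensors_linearIndependent
    {V : Type*} [AddCommGroup V] [Module ℂ V] [FiniteDimensional ℂ V]
    (B : LinearMap.BilinForm ℂ V)
    (hBsymm : ∀ x y, B x y = B y x)
    (hBnd : B.Nondegenerate)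
    {ι : Type*} [Fintype ι] [DecidableEq ι]
    (e f : Module.Basis ι ℂ V)
    (hdual : ∀ k l, B (e k) (f l) = if k = l then 1 else 0)
    (s : ℕ) (hs : 0 < s) (hsn : s ≤ Module.finrank ℂ V) :
    LinearIndependent ℂ
      (fun M : PerfectMatching (2 * s) => matchingTensor (⇑e) (⇑f) M.1) :=
  matchingTensors_linearIndependent_general B hBsymm hBnd e f hdual s hsn
end

section
/- Let V be a finite-dimensional vector space over ℂ with a nondegenerate symmetric bilinear form b, and assume V contains a nonzero isotropic vector ω (i.e. ω ≠ 0 and b(ω,ω) = 0). Then for every s ≥ 1, the sum Σ_M T_M over all perfect matchings M of {1,…,2s} is a nonzero element of V^{⊗2s}. -/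
open scoped TensorProduct

/-!
Since `ω ≠ 0`, the nondegenerate symmetric form `B` is nonzero, so (as `2` is invertible) it has
an anisotropic vector `v`. Evaluate with the functional `x₁ ⊗ ⋯ ⊗ x₂ₛ ↦ ∏ᵢ B v xᵢ`: it sends a
copy of the Casimir element to `∑ₖ B v eₖ · B v fₖ = B v v`, hence every `T_M` to `(B v v) ^ s`,
and the sum over matchings to `#matchings • (B v v) ^ s ≠ 0`.
-/

open PiTensorProduct

namespace Equiv.Perm

variable {α : Type*} [LinearOrder α] {σ : Equiv.Perm α}

theorem not_lt_apply_iff_apply_lt_apply (hσ : ∀ i, σ (σ i) = i ∧ σ i ≠ i) (i : α) :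
    ¬i < σ i ↔ σ i < σ (σ i) := by
  rw [(hσ i).1, not_lt, (hσ i).2.le_iff_lt]

theorem prod_eq_prod_subtype_lt_apply [Fintype α] {M : Type*} [CommMonoid M]
    (hσ : ∀ i, σ (σ i) = i ∧ σ i ≠ i) (x : α → M) :
    ∏ i, x i = ∏ l : {i // i < σ i}, x l * x (σ l) := by
  rw [← Fintype.prod_subtype_mul_prod_subtype (fun i => i < σ i), Finset.prod_mul_distrib]
  congr 1
  exact Fintype.prod_equiv (σ.subtypeEquiv (not_lt_apply_iff_apply_lt_apply hσ)) _ _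
    fun i => by simp [(hσ i).1]

theorem card_subtype_lt_apply_mul_two [Fintype α] (hσ : ∀ i, σ (σ i) = i ∧ σ i ≠ i) :
    Fintype.card {i // i < σ i} * 2 = Fintype.card α := by
  have hcompl := Fintype.card_subtype_compl (fun i => i < σ i)
  rw [Fintype.card_congr (σ.subtypeEquiv (q := fun i => i < σ i)
    (not_lt_apply_iff_apply_lt_apply hσ))] at hcompl
  omega

def lowerEnd (hσ : ∀ i, σ (σ i) = i ∧ σ i ≠ i) (j : α) : {i // i < σ i} :=
  ⟨min j (σ j), by
    rcases lt_or_gt_of_ne (hσ j).2.symm with h | h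
    · simpa [min_eq_left h.le] using h
    · simpa [min_eq_right h.le] using (not_lt_apply_iff_apply_lt_apply hσ j).1 h.not_gt⟩

theorem lowerEnd_coe (hσ : ∀ i, σ (σ i) = i ∧ σ i ≠ i) (l : {i // i < σ i}) :
    lowerEnd hσ l = l :=
  Subtype.ext (min_eq_left l.2.le)

theorem apply_lowerEnd_of_comp_eq {ι : Type*} (hσ : ∀ i, σ (σ i) = i ∧ σ i ≠ i)
    {h : α → ι} (hh : h ∘ σ = h) (j : α) : h (lowerEnd hσ j) = h j := by
  rcases min_choice j (σ j) with hmin | hmin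
  · simp [lowerEnd, hmin]
  · simpa [lowerEnd, hmin] using congrFun hh j

theorem lowerEnd_perm_apply (hσ : ∀ i, σ (σ i) = i ∧ σ i ≠ i) (j : α) :
    lowerEnd hσ (σ j) = lowerEnd hσ j :=
  Subtype.ext (by simp [lowerEnd, (hσ j).1, min_comm])

/-- A `σ`-invariant `h` amounts to a free choice of `h l` at the lower end `l` of each block. -/
theorem sum_ite_comp_eq_eq_prod_sum [Fintype α] {ι : Type*} [Fintype ι] [DecidableEq ι]
    {R : Type*} [CommSemiring R] (hσ : ∀ i, σ (σ i) = i ∧ σ i ≠ i) (x : α → ι → R) :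
    ∑ h : α → ι, (if h ∘ σ = h then ∏ i, x i (h i) else 0) =
      ∏ l : {i // i < σ i}, ∑ k, x l k * x (σ l) k := by
  rw [Fintype.prod_sum, ← Finset.sum_filter]
  refine Finset.sum_nbij' (fun h l => h l) (fun g => g ∘ lowerEnd hσ) ?_ ?_ ?_ ?_ ?_
  · simp
  · intro g _
    simp [funext_iff, lowerEnd_perm_apply]
  · intro h hh
    funext j
    exact apply_lowerEnd_of_comp_eq hσ (Finset.mem_filter.1 hh).2 j
  · intro g _
    funext l
    simp [lowerEnd_coe]
  · intro h hh
    have hσh : ∀ j, h (σ j) = h j := congrFun (Finset.mem_filter.1 hh).2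
    simp [prod_eq_prod_subtype_lt_apply hσ, hσh]

end Equiv.Perm

theorem LinearMap.BilinForm.sum_apply_mul_apply_of_dual_s2 {R M ι : Type*} [CommSemiring R]
    [AddCommMonoid M] [Module R M] [Fintype ι] [DecidableEq ι] (B : LinearMap.BilinForm R M)
    (e : Module.Basis ι R M) (f : ι → M)
    (hdual : ∀ k l, B (e k) (f l) = if k = l then 1 else 0) (x y : M) :
    ∑ k, B x (e k) * B y (f k) = B x y := by
  have hcoord : ∀ k, B y (f k) = e.repr y k := fun k => by
    calc B y (f k) = B (∑ l, e.repr y l • e l) (f k) := by rw [e.sum_repr]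
      _ = e.repr y k := by
        simp only [map_sum, map_smul, LinearMap.sum_apply, LinearMap.smul_apply, hdual,
          smul_eq_mul, mul_ite, mul_one, mul_zero, Finset.sum_ite_eq', Finset.mem_univ, if_true]
  calc ∑ k, B x (e k) * B y (f k) = B x (∑ k, e.repr y k • e k) := by
        simp only [hcoord, map_sum, map_smul, smul_eq_mul, mul_comm]
    _ = B x y := by rw [e.sum_repr]

theorem Fin.rev_ne_self_of_two_mul {s : ℕ} (i : Fin (2 * s)) : i.rev ≠ i := by
  intro h
  have := congrArg Fin.val h
  rw [Fin.val_rev] at this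
  omega

instance {s : ℕ} : Nonempty (PerfectMatching (2 * s)) :=
  ⟨⟨Fin.revPerm, fun i => ⟨Fin.rev_rev i, Fin.rev_ne_self_of_two_mul i⟩⟩⟩

theorem dualDistrib_matchingTensor {V : Type*} [AddCommGroup V] [Module ℂ V]
    {ι : Type*} [Fintype ι] [DecidableEq ι] (φ : Module.Dual ℂ V) (e f : ι → V) {s : ℕ}
    {σ : Equiv.Perm (Fin (2 * s))} (hσ : ∀ i, σ (σ i) = i ∧ σ i ≠ i) :
    dualDistrib (⨂ₜ[ℂ] _, φ) (matchingTensor e f σ) = (∑ k, φ (e k) * φ (f k)) ^ s := by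
  have hcard := σ.card_subtype_lt_apply_mul_two hσ
  rw [Fintype.card_fin] at hcard
  have hblock : ∀ l : {i // i < σ i}, ∀ k,
      (if (l : Fin (2 * s)) < σ l then φ (e k) else φ (f k)) *
        (if σ l < σ (σ l) then φ (e k) else φ (f k)) = φ (e k) * φ (f k) := fun l k => by
    have hσl : ¬σ l < σ (σ l) := by rw [(hσ l).1]; exact l.2.asymm
    rw [if_pos l.2, if_neg hσl]
  simp only [matchingTensor, map_sum, apply_ite, map_zero, dualDistrib_apply]
  rw [σ.sum_ite_comp_eq_eq_prod_sum hσ (fun i k => if i < σ i then φ (e k) else φ (f k))]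
  simp only [hblock, Finset.prod_const, Finset.card_univ]
  congr 1
  omega

theorem sum_matchingTensors_ne_zero_general
    {V : Type*} [AddCommGroup V] [Module ℂ V]
    (B : LinearMap.BilinForm ℂ V)
    (hBsymm : ∀ x y, B x y = B y x)
    (hBnd : B.Nondegenerate)
    (ω : V) (hω : ω ≠ 0)
    {ι : Type*} [Fintype ι] [DecidableEq ι]
    (e f : Module.Basis ι ℂ V)
    (hdual : ∀ k l, B (e k) (f l) = if k = l then 1 else 0)
    (s : ℕ) :
    (∑ M : PerfectMatching (2 * s), matchingTensor (⇑e) (⇑f) M.1) ≠ 0 := by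
  have : Nontrivial V := nontrivial_of_ne ω 0 hω
  obtain ⟨v, hv⟩ : ∃ v, B v v ≠ 0 :=
    B.exists_bilinForm_self_ne_zero hBnd.ne_zero ⟨hBsymm⟩
  intro hsum
  have hval := congrArg (dualDistrib (⨂ₜ[ℂ] _ : Fin (2 * s), B v)) hsum
  simp only [map_sum, map_zero, fun M : PerfectMatching (2 * s) =>
    dualDistrib_matchingTensor (B v) e f M.2, B.sum_apply_mul_apply_of_dual_s2 e f hdual,
    Finset.sum_const, nsmul_eq_mul] at hval
  exact mul_ne_zero (Nat.cast_ne_zero.2 Fintype.card_ne_zero) (pow_ne_zero s hv) hval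

/-- Let `V` be a finite-dimensional vector space over `ℂ` with a nondegenerate symmetric
bilinear form `b`, and assume `V` contains a nonzero isotropic vector `ω`. Then for every
`s ≥ 1`, the sum `Σ_M T_M` over all perfect matchings `M` of `{1,…,2s}` is a nonzero element
of `V^{⊗2s}`. -/
theorem sum_matchingTensors_ne_zero
    {V : Type*} [AddCommGroup V] [Module ℂ V] [FiniteDimensional ℂ V]
    (B : LinearMap.BilinForm ℂ V)
    (hBsymm : ∀ x y, B x y = B y x)
    (hBnd : B.Nondegenerate)
    (ω : V) (hω : ω ≠ 0) (hiso : B ω ω = 0)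
    {ι : Type*} [Fintype ι] [DecidableEq ι]
    (e f : Module.Basis ι ℂ V)
    (hdual : ∀ k l, B (e k) (f l) = if k = l then 1 else 0)
    (s : ℕ) (hs : 1 ≤ s) :
    (∑ M : PerfectMatching (2 * s), matchingTensor (⇑e) (⇑f) M.1) ≠ 0 :=
  sum_matchingTensors_ne_zero_general B hBsymm hBnd ω hω e f hdual s
end

section
/- Let V be a finite-dimensional vector space over ℂ with a nondegenerate symmetric bilinear form b, let s ≥ 1, and let α₁,…,α_s ∈ V satisfy b(αᵢ,αⱼ) = δᵢⱼ (an orthonormal family). Let c_α : V^{⊗2s} → V^{⊗s} be the contraction applying the functional b(·, αᵢ) to the (s+i)-th tensor factor for each i = 1,…,s and the identity to the first s factors. Then for a perfect matching M of {1,…,2s}: (i) if M contains a block {i,j} with both i,j ∈ {s+1,…,2s}, then c_α(T_M) = 0; and (ii) if M = {{i, s+σ(i)} : 1 ≤ i ≤ s} for a permutation σ of {1,…,s}, then c_α(T_M) = α_{σ(1)} ⊗ ⋯ ⊗ α_{σ(s)}. -/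
open scoped TensorProduct

/-- The contraction `V^{⊗2s} → V^{⊗s}` which applies the linear functional `φ i` to the
`(s+i)`-th tensor factor (for `i = 1,…,s`) and the identity to the first `s` factors:
on pure tensors, `v₁ ⊗ ⋯ ⊗ v_{2s} ↦ (Π_i φ i (v_{s+i})) • v₁ ⊗ ⋯ ⊗ v_s`. -/
noncomputable def halfContraction {V : Type*} [AddCommGroup V] [Module ℂ V] {s : ℕ}
    (φ : Fin s → (V →ₗ[ℂ] ℂ)) :
    (⨂[ℂ] _ : Fin (2 * s), V) →ₗ[ℂ] ⨂[ℂ] _ : Fin s, V :=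
  (TensorProduct.rid ℂ _).toLinearMap
    ∘ₗ TensorProduct.map LinearMap.id
        (PiTensorProduct.lift ((MultilinearMap.mkPiAlgebra ℂ (Fin s) ℂ).compLinearMap φ))
    ∘ₗ (PiTensorProduct.tmulEquiv ℂ V).symm.toLinearMap
    ∘ₗ (PiTensorProduct.reindex ℂ (fun _ : Fin (2 * s) => V)
          ((finCongr (by ring : 2 * s = s + s)).trans finSumFinEquiv.symm)).toLinearMap

/-!
A summand of `T_M` chooses one index of the dual bases per block of `M`, so the
`σ`-invariant index functions are reparametrised by functions on the blocks, each block
being labelled by its smaller element `min x (σ x)`. If a block `{i, σ i}` lies in the last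
`s` slots, the contraction pairs its copy of `∑ₘ eₘ ⊗ fₘ` with `α_a ⊗ α_b`, and summing over
the index of that block alone produces the factor
`∑ₘ B(eₘ, α_a) B(fₘ, α_b) = B(α_a, α_b) = 0`. If `M` pairs slot `j` with `s + τ j`, every
block contributes `∑ₘ B(fₘ, α_{τ j}) eₘ = α_{τ j}` to slot `j`.
-/

open Function PiTensorProduct

theorem min_apply_eq_min_apply_iff {α : Type*} [LinearOrder α] {σ : Equiv.Perm α}
    (hσ : Involutive σ) {x y : α} : min x (σ x) = min y (σ y) ↔ x = y ∨ x = σ y := by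
  refine ⟨fun h => ?_, ?_⟩
  · rcases min_choice x (σ x) with hx | hx <;> rcases min_choice y (σ y) with hy | hy <;>
      rw [hx, hy] at h
    · exact .inl h
    · exact .inr h
    · exact .inr (by rw [← h, hσ])
    · exact .inl (σ.injective h)
  · rintro (rfl | rfl)
    · rfl
    · rw [hσ, min_comm]

theorem sum_ite_comp_eq_self {α β ι M : Type*} [Fintype α] [DecidableEq α] [Fintype β]
    [DecidableEq β] [Fintype ι] [DecidableEq ι] [AddCommMonoid M] (σ : Equiv.Perm α)
    (r : α → β) (hr : Surjective r) (hr_eq : ∀ x y, r x = r y ↔ x = y ∨ x = σ y)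
    (F : (α → ι) → M) :
    ∑ h : α → ι, (if h ∘ σ = h then F h else 0) = ∑ k : β → ι, F (k ∘ r) := by
  have himage :
      Finset.univ.image (· ∘ r) = Finset.univ.filter fun h : α → ι => h ∘ σ = h := by
    ext h
    simp only [Finset.mem_image, Finset.mem_univ, true_and, Finset.mem_filter]
    refine ⟨?_, fun hh => ⟨h ∘ surjInv hr, funext fun x => ?_⟩⟩
    · rintro ⟨k, rfl⟩
      exact funext fun x => congrArg k ((hr_eq _ _).2 (.inr rfl))
    · rcases (hr_eq _ _).1 (surjInv_eq hr (r x)) with hx | hx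
      · simp [hx]
      · simp only [comp_apply, hx]; exact congrFun hh x
  rw [← Finset.sum_filter, ← himage,
    Finset.sum_image fun _ _ _ _ h => hr.injective_comp_right h]

theorem sum_eq_zero_of_update {β ι R M : Type*} [Fintype β] [DecidableEq β] [Fintype ι]
    [Semiring R] [AddCommMonoid M] [Module R M] (l : β) {c : ι → R} (hc : ∑ m, c m = 0)
    {G : (β → ι) → M} (hG : ∀ k m, G (update k l m) = G k) {F : (β → ι) → M}
    (hF : ∀ k, F k = c (k l) • G k) : ∑ k, F k = 0 := by
  rcases isEmpty_or_nonempty ι with hι | ⟨⟨m₀⟩⟩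
  · have : IsEmpty (β → ι) := isEmpty_fun.2 ⟨⟨l⟩, hι⟩
    simp
  let split := Equiv.funSplitAt l ι
  have hsplit : ∀ m k', split.symm (m, k') = update (split.symm (m₀, k')) l m := by
    intro m k'
    ext j
    by_cases hj : j = l
    · subst hj; simp [split]
    · simp [split, hj]
  simp_rw [hF, ← split.symm.sum_comp, Fintype.sum_prod_type]
  calc ∑ m, ∑ k', c (split.symm (m, k') l) • G (split.symm (m, k'))
      = ∑ m, c m • ∑ k', G (split.symm (m₀, k')) := by
        refine Finset.sum_congr rfl fun m _ => ?_
        rw [Finset.smul_sum]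
        refine Finset.sum_congr rfl fun k' _ => ?_
        rw [hsplit, hG, update_self]
    _ = 0 := by rw [← Finset.sum_smul, hc, zero_smul]

section DualBases

variable {R V ι : Type*} [CommRing R] [AddCommGroup V] [Module R V] [Fintype ι] [DecidableEq ι]
  (B : LinearMap.BilinForm R V) {e f : Module.Basis ι R V}

theorem repr_eq_of_dual_left (hdual : ∀ k l, B (e k) (f l) = if k = l then 1 else 0)
    (w : V) (k : ι) : e.repr w k = B w (f k) := by
  conv_rhs => rw [← e.sum_repr w]
  simp only [map_sum, map_smul, LinearMap.sum_apply, LinearMap.smul_apply, hdual, smul_eq_mul,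
    mul_ite, mul_one, mul_zero, Finset.sum_ite_eq', Finset.mem_univ, if_true]

theorem repr_eq_of_dual_right (hdual : ∀ k l, B (e k) (f l) = if k = l then 1 else 0)
    (w : V) (k : ι) : f.repr w k = B (e k) w := by
  conv_rhs => rw [← f.sum_repr w]
  simp only [map_sum, map_smul, hdual, smul_eq_mul, mul_ite, mul_one, mul_zero,
    Finset.sum_ite_eq, Finset.mem_univ, if_true]

theorem sum_smul_eq_of_dual (hdual : ∀ k l, B (e k) (f l) = if k = l then 1 else 0)
    (w : V) : ∑ k, B w (f k) • e k = w := by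
  simpa [repr_eq_of_dual_left B hdual] using e.sum_repr w

theorem sum_mul_eq_of_dual (hdual : ∀ k l, B (e k) (f l) = if k = l then 1 else 0)
    (x y : V) : ∑ k, B (e k) x * B (f k) y = B x y := by
  conv_rhs => rw [← f.sum_repr x]
  simp [repr_eq_of_dual_right B hdual]

theorem sum_ite_mul_ite_eq_of_dual (hdual : ∀ k l, B (e k) (f l) = if k = l then 1 else 0)
    (p : Prop) [Decidable p] (x y : V) :
    ∑ k, B (if p then e k else f k) x * B (if p then f k else e k) y
      = if p then B x y else B y x := by
  split_ifs
  · exact sum_mul_eq_of_dual B hdual x y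
  · simp_rw [mul_comm (B (f _) x)]
    exact sum_mul_eq_of_dual B hdual y x

theorem sum_smul_tprod_eq_of_dual (hBsymm : ∀ x y, B x y = B y x)
    (hdual : ∀ k l, B (e k) (f l) = if k = l then 1 else 0) {κ : Type*} [Fintype κ]
    [DecidableEq κ] (τ : Equiv.Perm κ) (α : κ → V) :
    ∑ k : κ → ι, (∏ i, B (f (k (τ.symm i))) (α i)) • tprod R (e ∘ k)
      = tprod R (fun i => α (τ i)) :=
  calc ∑ k : κ → ι, (∏ i, B (f (k (τ.symm i))) (α i)) • tprod R (e ∘ k)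
      = ∑ k : κ → ι, tprod R (fun j => B (f (k j)) (α (τ j)) • e (k j)) := by
        refine Finset.sum_congr rfl fun k _ => ?_
        rw [MultilinearMap.map_smul_univ, ← Equiv.prod_comp τ]
        simp only [Equiv.symm_apply_apply]
        rfl
    _ = tprod R (fun j => ∑ m, B (f m) (α (τ j)) • e m) :=
        (MultilinearMap.map_sum _ fun j m => B (f m) (α (τ j)) • e m).symm
    _ = tprod R (fun i => α (τ i)) := by
        simp only [hBsymm _ (α _), sum_smul_eq_of_dual B hdual]

end DualBases

theorem exists_fin_add_eq_of_le {s : ℕ} {x : Fin (2 * s)} (hx : s ≤ (x : ℕ)) :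
    ∃ i : Fin s, (⟨s + i, by omega⟩ : Fin (2 * s)) = x :=
  ⟨⟨x - s, by omega⟩, Fin.ext (by simp only; omega)⟩

theorem halfContraction_tprod {V : Type*} [AddCommGroup V] [Module ℂ V] {s : ℕ}
    (φ : Fin s → (V →ₗ[ℂ] ℂ)) (v : Fin (2 * s) → V) :
    halfContraction φ (tprod ℂ v)
      = (∏ i : Fin s, φ i (v ⟨s + i, by omega⟩)) •
          tprod ℂ (fun j : Fin s => v (⟨j, by omega⟩ : Fin (2 * s))) := by
  simp only [halfContraction, LinearMap.comp_apply, LinearEquiv.coe_toLinearMap,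
    reindex_tprod]
  rw [show (fun i => v (((finCongr (by ring : 2 * s = s + s)).trans finSumFinEquiv.symm).symm i))
      = Sum.elim (fun j : Fin s => v (⟨j, by omega⟩ : Fin (2 * s)))
        (fun i : Fin s => v ⟨s + i, by omega⟩) by
    ext (i | i) <;> rfl]
  simp [tmulEquiv_symm_apply]

def matchingSlot {V ι : Type*} (e f : ι → V) {n : ℕ} (σ : Equiv.Perm (Fin n))
    (h : Fin n → ι) (x : Fin n) : V :=
  if x < σ x then e (h x) else f (h x)

theorem matchingSlot_update_comp {V ι β : Type*} [DecidableEq β] (e f : ι → V) {n : ℕ}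
    (σ : Equiv.Perm (Fin n)) (r : Fin n → β) (k : β → ι) {l : β} (m : ι) {x : Fin n}
    (hx : r x ≠ l) :
    matchingSlot e f σ (update k l m ∘ r) x = matchingSlot e f σ (k ∘ r) x := by
  simp only [matchingSlot, comp_apply, update_of_ne hx]

theorem matchingTensor_eq_sum_comp {V ι β : Type*} [AddCommGroup V] [Module ℂ V]
    [Fintype ι] [DecidableEq ι] [Fintype β] [DecidableEq β] (e f : ι → V) {s : ℕ}
    (σ : Equiv.Perm (Fin (2 * s))) (r : Fin (2 * s) → β) (hr : Surjective r)
    (hr_eq : ∀ x y, r x = r y ↔ x = y ∨ x = σ y) :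
    matchingTensor e f σ = ∑ k : β → ι, tprod ℂ (matchingSlot e f σ (k ∘ r)) :=
  sum_ite_comp_eq_self σ r hr hr_eq _

section Contraction

variable {V ι : Type*} [AddCommGroup V] [Module ℂ V] [Fintype ι] [DecidableEq ι]
  (B : LinearMap.BilinForm ℂ V) {e f : Module.Basis ι ℂ V} {s : ℕ}
  {σ : Equiv.Perm (Fin (2 * s))} (α : Fin s → V)

theorem halfContraction_matchingTensor_eq_tprod (hBsymm : ∀ x y, B x y = B y x)
    (hdual : ∀ k l, B (e k) (f l) = if k = l then 1 else 0) (hσ : Involutive σ)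
    (τ : Equiv.Perm (Fin s)) (hτ : ∀ i : Fin s, (σ ⟨i, by omega⟩ : ℕ) = s + τ i) :
    halfContraction (fun i => B.flip (α i)) (matchingTensor e f σ)
      = tprod ℂ (fun i => α (τ i)) := by
  have hσ_first (j : Fin s) : σ ⟨j, by omega⟩ = ⟨s + τ j, by omega⟩ := Fin.ext (hτ j)
  have hσ_second (i : Fin s) : σ ⟨s + i, by omega⟩ = ⟨τ.symm i, by omega⟩ := by
    rw [hσ.eq_iff]
    exact Fin.ext (by rw [hτ, Equiv.apply_symm_apply])
  have hmin_lt (x : Fin (2 * s)) : ((min x (σ x) : Fin (2 * s)) : ℕ) < s := by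
    by_cases hx : (x : ℕ) < s
    · exact lt_of_le_of_lt (min_le_left x (σ x)) hx
    · obtain ⟨i, hi⟩ := exists_fin_add_eq_of_le (not_lt.1 hx)
      exact lt_of_le_of_lt (min_le_right _ _) (by rw [← hi, hσ_second]; exact (τ.symm i).isLt)
  -- `r` sends each block `{j, s + τ j}` of the matching to `j`
  let r : Fin (2 * s) → Fin s := fun x => ⟨(min x (σ x) : Fin (2 * s)), hmin_lt x⟩
  have hr_first (j : Fin s) : r ⟨j, by omega⟩ = j :=
    Fin.ext (by simp only [r, hσ_first, Fin.coe_min]; omega)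
  have hr_second (i : Fin s) : r ⟨s + i, by omega⟩ = τ.symm i :=
    Fin.ext (by simp only [r, hσ_second, Fin.coe_min]; omega)
  have hr_eq (x y) : r x = r y ↔ x = y ∨ x = σ y := by
    simp only [r, Fin.mk.injEq, Fin.val_inj]
    exact min_apply_eq_min_apply_iff hσ
  have hlt_first (j : Fin s) : (⟨j, by omega⟩ : Fin (2 * s)) < σ ⟨j, by omega⟩ := by
    simp only [hσ_first, Fin.lt_def]; omega
  have hnlt_second (i : Fin s) :
      ¬ (⟨s + i, by omega⟩ : Fin (2 * s)) < σ ⟨s + i, by omega⟩ := by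
    simp only [hσ_second, Fin.lt_def]; omega
  rw [matchingTensor_eq_sum_comp e f σ r (fun j => ⟨_, hr_first j⟩) hr_eq, map_sum]
  simp only [halfContraction_tprod, matchingSlot, comp_apply, hlt_first, hnlt_second, if_true,
    if_false, hr_first, hr_second]
  exact sum_smul_tprod_eq_of_dual B hBsymm hdual τ α

theorem halfContraction_matchingTensor_eq_zero
    (hdual : ∀ k l, B (e k) (f l) = if k = l then 1 else 0)
    (hα : ∀ i j, i ≠ j → B (α i) (α j) = 0) (hσ : Involutive σ) (i : Fin (2 * s))
    (hσi_ne : σ i ≠ i) (hi : s ≤ (i : ℕ)) (hσi : s ≤ (σ i : ℕ)) :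
    halfContraction (fun i => B.flip (α i)) (matchingTensor e f σ) = 0 := by
  let r := Set.rangeFactorization fun x => min x (σ x)
  have hr_eq (x y) : r x = r y ↔ x = y ∨ x = σ y := by
    rw [Set.rangeFactorization_eq_rangeFactorization_iff]
    exact min_apply_eq_min_apply_iff hσ
  have hr_ne {x} (hx : x ≠ i) (hx' : x ≠ σ i) : r x ≠ r i :=
    fun h => ((hr_eq x i).1 h).elim hx hx'
  rw [matchingTensor_eq_sum_comp e f σ r Set.rangeFactorization_surjective hr_eq, map_sum]
  obtain ⟨a, ha⟩ := exists_fin_add_eq_of_le hi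
  obtain ⟨b, hb⟩ := exists_fin_add_eq_of_le hσi
  have hab : a ≠ b := by
    rintro rfl
    exact hσi_ne (hb.symm.trans ha)
  have hσi_lt : σ i < i ↔ ¬ i < σ i := by
    rw [not_lt]; exact ⟨le_of_lt, fun h => lt_of_le_of_ne h hσi_ne⟩
  refine sum_eq_zero_of_update (r i)
    (c := fun m =>
      B (if i < σ i then e m else f m) (α a) * B (if i < σ i then f m else e m) (α b))
    (G := fun k =>
      (∏ i' ∈ {a, b}ᶜ, B (matchingSlot e f σ (k ∘ r) ⟨s + i', by omega⟩) (α i')) •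
        tprod ℂ (fun j : Fin s => matchingSlot e f σ (k ∘ r) ⟨j, by omega⟩))
    ?_ (fun k m => ?_) (fun k => ?_)
  · rw [sum_ite_mul_ite_eq_of_dual B hdual]
    split_ifs
    exacts [hα a b hab, hα b a hab.symm]
  · congr 1
    · refine Finset.prod_congr rfl fun i' hi' => ?_
      simp only [Finset.mem_compl, Finset.mem_insert, Finset.mem_singleton, not_or] at hi'
      rw [matchingSlot_update_comp _ _ _ _ _ _ (hr_ne _ _)]
      · rw [← ha]; exact fun h => hi'.1 (Fin.ext (by simpa using h))
      · rw [← hb]; exact fun h => hi'.2 (Fin.ext (by simpa using h))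
    · congr 1
      funext j
      rw [matchingSlot_update_comp _ _ _ _ _ _ (hr_ne _ _)] <;>
        exact ne_of_apply_ne Fin.val (by simp only; omega)
  · rw [halfContraction_tprod, ← Finset.prod_mul_prod_compl {a, b}, Finset.prod_pair hab,
      mul_smul]
    congr 1
    simp only [ha, hb, matchingSlot, comp_apply, hσ i, hσi_lt, (hr_eq (σ i) i).2 (.inr rfl)]
    split_ifs <;> rfl

end Contraction

/-- Let `V` be a finite-dimensional complex vector space with a nondegenerate symmetric
bilinear form `b`, `s ≥ 1`, and `α₁,…,α_s ∈ V` an orthonormal family. Let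
`c_α : V^{⊗2s} → V^{⊗s}` be the contraction applying `b(·, αᵢ)` to the `(s+i)`-th tensor
factor and the identity to the first `s` factors. Then for a perfect matching `M` of
`{1,…,2s}`: (i) if `M` has a block entirely contained in the last `s` indices, then
`c_α (T_M) = 0`; and (ii) if `M = {{i, s+σ(i)}}` for a permutation `σ` of `{1,…,s}`, then
`c_α (T_M) = α_{σ(1)} ⊗ ⋯ ⊗ α_{σ(s)}`. -/
theorem halfContraction_matchingTensor_orthonormal
    {V : Type*} [AddCommGroup V] [Module ℂ V]
    (B : LinearMap.BilinForm ℂ V)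
    (hBsymm : ∀ x y, B x y = B y x)
    {ι : Type*} [Fintype ι] [DecidableEq ι]
    (e f : Module.Basis ι ℂ V)
    (hdual : ∀ k l, B (e k) (f l) = if k = l then 1 else 0)
    (s : ℕ)
    (α : Fin s → V) (hortho : ∀ i j, B (α i) (α j) = if i = j then 1 else 0)
    (M : PerfectMatching (2 * s)) :
    ((∃ i : Fin (2 * s), s ≤ (i : ℕ) ∧ s ≤ ((M.1 i : Fin (2 * s)) : ℕ)) →
        halfContraction (fun i => B.flip (α i)) (matchingTensor (⇑e) (⇑f) M.1) = 0)
    ∧ (∀ σ : Equiv.Perm (Fin s),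
        (∀ i : Fin s, ((M.1 (Fin.castLE (by omega) i) : Fin (2 * s)) : ℕ) = s + σ i) →
        halfContraction (fun i => B.flip (α i)) (matchingTensor (⇑e) (⇑f) M.1)
          = PiTensorProduct.tprod ℂ (fun i => α (σ i))) := by
  have hM : Involutive M.1 := fun x => (M.2 x).1
  have hα (i j : Fin s) (hij : i ≠ j) : B (α i) (α j) = 0 := by rw [hortho, if_neg hij]
  exact ⟨fun ⟨i, hi, hMi⟩ =>
      halfContraction_matchingTensor_eq_zero B α hdual hα hM i (M.2 i).2 hi hMi,
    halfContraction_matchingTensor_eq_tprod B α hBsymm hdual hM⟩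
end

section
/- Let R be a commutative ring that is a ℚ-algebra, H ⊆ R a ℚ-linear subspace, Q : H → ℚ a quadratic form with polar form B(x,y) = Q(x+y) − Q(x) − Q(y), and A : H → R a ℚ-linear map such that x³ = Q(x)·A(x) holds in R for every x ∈ H. Then for all d, l ∈ H with B(d,l) = 0, one has Q(l)·d³ = 3·Q(d)·(l²·d) in R. -/
/-!
Polarize the cubic relation along the orthogonal pair: since `Q (d ± l) = Q d + Q l`, adding the
relations for `d + l` and `d - l` gives `d³ + 3 d l² = (Q d + Q l) • A d`. Scaling by `Q d` and
substituting `Q d • A d = d³` leaves `Q l • d³ = 3 Q d • l² d`.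
-/

namespace QuadraticMap

variable {K M N : Type*} [CommRing K] [AddCommGroup M] [Module K M] [AddCommGroup N] [Module K N]
  {Q : QuadraticMap K M N} {x y : M}

theorem IsOrtho.map_sub (h : Q.IsOrtho x y) : Q (x - y) = Q x + Q y := by
  have h' : Q.IsOrtho x (-y) := isOrtho_polarBilin.mp <| by
    rw [polarBilin_apply_apply, polar_neg_right, h.polar_eq_zero, neg_zero]
  rw [sub_eq_add_neg, isOrtho_def.mp h', Q.map_neg]

end QuadraticMap

section CubicRelation

variable {K M R : Type*} [CommRing K] [AddCommGroup M] [Module K M] [CommRing R] [Algebra K R]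
  (ι : M →ₗ[K] R) (Q : QuadraticForm K M) (A : M →ₗ[K] R)

theorem cube_add_three_mul_sq_eq_smul_of_isOrtho [Invertible (2 : K)]
    (hQA : ∀ x, ι x ^ 3 = Q x • A x) {d l : M} (h : Q.IsOrtho d l) :
    ι d ^ 3 + 3 * (ι l ^ 2 * ι d) = (Q d + Q l) • A d := by
  have hsum : (2 : K) • (ι d ^ 3 + 3 * (ι l ^ 2 * ι d)) = (2 : K) • ((Q d + Q l) • A d) :=
    calc (2 : K) • (ι d ^ 3 + 3 * (ι l ^ 2 * ι d)) = ι (d + l) ^ 3 + ι (d - l) ^ 3 := by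
          rw [map_add, map_sub, ofNat_smul_eq_nsmul, nsmul_eq_mul]; push_cast; ring
      _ = (2 : K) • ((Q d + Q l) • A d) := by
          rw [hQA, hQA, QuadraticMap.isOrtho_def.mp h, h.map_sub, ← smul_add, map_add, map_sub,
            smul_comm, ofNat_smul_eq_nsmul (R := K), two_nsmul]
          abel_nf
  simpa using congrArg ((⅟2 : K) • ·) hsum

theorem smul_cube_eq_of_isOrtho [Invertible (2 : K)]
    (hQA : ∀ x, ι x ^ 3 = Q x • A x) {d l : M} (h : Q.IsOrtho d l) :
    Q l • ι d ^ 3 = (3 * Q d) • (ι l ^ 2 * ι d) := by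
  have key := cube_add_three_mul_sq_eq_smul_of_isOrtho ι Q A hQA h
  calc Q l • ι d ^ 3 = Q d • ((Q d + Q l) • A d) - Q d • ι d ^ 3 := by
        rw [smul_comm, ← hQA, ← sub_smul, add_sub_cancel_left]
    _ = (3 * Q d) • (ι l ^ 2 * ι d) := by
        rw [← key, smul_add, add_sub_cancel_left, mul_smul, ← mul_smul_comm,
          ofNat_smul_eq_nsmul, nsmul_eq_mul, Nat.cast_ofNat]

end CubicRelation

/-- Let `R` be a commutative `ℚ`-algebra, `H ⊆ R` a `ℚ`-linear subspace, `Q : H → ℚ` a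
quadratic form with polar form `B(x,y) = Q(x+y) − Q(x) − Q(y)`, and `A : H → R` a
`ℚ`-linear map such that `x³ = Q(x)·A(x)` in `R` for every `x ∈ H`. Then for all
`d, l ∈ H` with `B(d,l) = 0`, one has `Q(l)·d³ = 3·Q(d)·(l²·d)` in `R`. -/
theorem cube_relation_of_quadratic_relation
    {R : Type*} [CommRing R] [Algebra ℚ R]
    (H : Submodule ℚ R) (Q : QuadraticForm ℚ H) (A : H →ₗ[ℚ] R)
    (hQA : ∀ x : H, (x : R) ^ 3 = Q x • A x)
    (d l : H) (horth : QuadraticMap.polar (⇑Q) d l = 0) :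
    Q l • ((d : R) ^ 3) = (3 * Q d) • (((l : R) ^ 2) * (d : R)) :=
  smul_cube_eq_of_isOrtho H.subtype Q A hQA (QuadraticMap.isOrtho_polarBilin.mp horth)
end

section
/- Let V be a finite-dimensional complex vector space, q : V → ℂ a nondegenerate quadratic form, W a finite-dimensional complex vector space, T : V × V × V → W a symmetric trilinear map, and C : V → W the cubic map C(x) = T(x,x,x). If C(x) = 0 for every x ∈ V with q(x) = 0, then there exists a ℂ-linear map A : V → W such that C(x) = q(x)·A(x) for all x ∈ V. -/
set_option linter.unusedSectionVars false
set_option linter.unreachableTactic false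
set_option linter.unusedTactic false
set_option linter.deprecated false

open Complex

namespace CubicAux

variable {V W : Type*} [AddCommGroup V] [Module ℂ V] [AddCommGroup W] [Module ℂ W]

lemma upd0 (a b c d : V) : Function.update ![a,b,c] (0 : Fin 3) d = ![d,b,c] := by
  funext i; fin_cases i <;> simp [Function.update_apply]

lemma upd1 (a b c d : V) : Function.update ![a,b,c] (1 : Fin 3) d = ![a,d,c] := by
  funext i; fin_cases i <;> simp [Function.update_apply]

lemma upd2 (a b c d : V) : Function.update ![a,b,c] (2 : Fin 3) d = ![a,b,d] := by
  funext i; fin_cases i <;> simp [Function.update_apply]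

/-- `T` as a function of three arguments. -/
def t3 (T : MultilinearMap ℂ (fun _ : Fin 3 => V) W) (a b c : V) : W := T ![a,b,c]

variable (T : MultilinearMap ℂ (fun _ : Fin 3 => V) W)

lemma t3_addL (a a' b c : V) : t3 T (a+a') b c = t3 T a b c + t3 T a' b c := by
  have h := T.map_update_add ![a,b,c] 0 a a'
  rwa [upd0, upd0, upd0] at h

lemma t3_addM (a b b' c : V) : t3 T a (b+b') c = t3 T a b c + t3 T a b' c := by
  have h := T.map_update_add ![a,b,c] 1 b b'
  rwa [upd1, upd1, upd1] at h

lemma t3_addR (a b c c' : V) : t3 T a b (c+c') = t3 T a b c + t3 T a b c' := by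
  have h := T.map_update_add ![a,b,c] 2 c c'
  rwa [upd2, upd2, upd2] at h

lemma t3_smulL (s : ℂ) (a b c : V) : t3 T (s • a) b c = s • t3 T a b c := by
  have h := T.map_update_smul ![a,b,c] 0 s a
  rwa [upd0, upd0] at h

lemma t3_smulM (s : ℂ) (a b c : V) : t3 T a (s • b) c = s • t3 T a b c := by
  have h := T.map_update_smul ![a,b,c] 1 s b
  rwa [upd1, upd1] at h

lemma t3_smulR (s : ℂ) (a b c : V) : t3 T a b (s • c) = s • t3 T a b c := by
  have h := T.map_update_smul ![a,b,c] 2 s c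
  rwa [upd2, upd2] at h

variable (hs : ∀ (σ : Equiv.Perm (Fin 3)) (v : Fin 3 → V), T (v ∘ σ) = T v)
include hs

lemma t3_swap01 (a b c : V) : t3 T b a c = t3 T a b c := by
  have h := hs (Equiv.swap 0 1) ![a,b,c]
  have he : ![a,b,c] ∘ (Equiv.swap (0 : Fin 3) 1) = ![b,a,c] := by
    funext i; fin_cases i <;> simp [Equiv.swap_apply_def]
  rwa [he] at h

lemma t3_swap12 (a b c : V) : t3 T a c b = t3 T a b c := by
  have h := hs (Equiv.swap 1 2) ![a,b,c]
  have he : ![a,b,c] ∘ (Equiv.swap (1 : Fin 3) 2) = ![a,c,b] := by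
    funext i; fin_cases i <;> simp [Equiv.swap_apply_def]
  rwa [he] at h

lemma t3_xyx (a b : V) : t3 T a b a = t3 T a a b := t3_swap12 T hs a a b

lemma t3_yxx (a b : V) : t3 T b a a = t3 T a a b := by
  rw [t3_swap01 T hs a b a, t3_xyx T hs]

lemma t3_yxy (a b : V) : t3 T b a b = t3 T b b a := t3_swap12 T hs b b a

lemma t3_cyc (a b c : V) : t3 T b c a = t3 T a b c := by
  rw [t3_swap12 T hs b a c, t3_swap01 T hs a b c]

lemma t3_cyc2 (a b c : V) : t3 T c a b = t3 T a b c := by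
  rw [← t3_cyc T hs a b c, ← t3_cyc T hs b c a]

lemma t3_rev (a b c : V) : t3 T c b a = t3 T a b c := by
  rw [t3_swap01 T hs b c a, t3_cyc T hs a b c]

omit hs

lemma fun_cube (x : V) : T (fun _ : Fin 3 => x) = t3 T x x x := by
  have : (fun _ : Fin 3 => x) = ![x,x,x] := by funext i; fin_cases i <;> rfl
  rw [this]; rfl

include hs

lemma cube_add2 (x y : V) :
    t3 T (x+y) (x+y) (x+y)
      = t3 T x x x + (3:ℂ) • t3 T x x y + (3:ℂ) • t3 T y y x + t3 T y y y := by
  simp only [t3_addL, t3_addM, t3_addR]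
  rw [t3_yxx T hs x y, t3_xyx T hs x y, t3_yxy T hs x y, t3_yxx T hs y x]
  module

lemma cube_expand1 (u w : V) (c : ℂ) :
    T (fun _ : Fin 3 => u + c • w)
      = t3 T u u u + (3*c) • t3 T u u w + (3*c^2) • t3 T w w u + c^3 • t3 T w w w := by
  rw [fun_cube, cube_add2 T hs]
  simp only [t3_smulL, t3_smulM, t3_smulR]
  module

lemma cube_expand2 (u v w : V) (c : ℂ) :
    T (fun _ : Fin 3 => u + v + c • w)
      = t3 T u u u + (3:ℂ) • t3 T u u v + (3:ℂ) • t3 T v v u + t3 T v v v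
        + (3*c) • t3 T u u w + (3*c) • t3 T v v w + (6*c) • t3 T u v w
        + (3*c^2) • t3 T w w u + (3*c^2) • t3 T w w v + c^3 • t3 T w w w := by
  rw [fun_cube, cube_add2 T hs (u + v) (c • w)]
  rw [cube_add2 T hs u v]
  simp only [t3_smulL, t3_smulM, t3_smulR, t3_addL, t3_addM, t3_addR]
  rw [t3_swap01 T hs u v w]
  module



variable {V W : Type*} [AddCommGroup V] [Module ℂ V] [AddCommGroup W] [Module ℂ W]

omit hs

/-- The symmetrized product of a bilinear form and a linear map, as a trilinear map. -/
noncomputable def combo (Bq : LinearMap.BilinForm ℂ V) (A : V →ₗ[ℂ] W) :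
    MultilinearMap ℂ (fun _ : Fin 3 => V) W where
  toFun m := (6:ℂ)⁻¹ • (Bq (m 0) (m 1) • A (m 2) + Bq (m 1) (m 2) • A (m 0)
      + Bq (m 0) (m 2) • A (m 1))
  map_update_add' := by
    intro dec m i x y
    have hd : dec = instDecidableEqFin 3 := Subsingleton.elim _ _
    subst hd
    fin_cases i <;>
      simp [Function.update_apply, Fin.ext_iff, map_add, map_smul, LinearMap.add_apply,
        LinearMap.smul_apply, smul_eq_mul] <;>
      module
  map_update_smul' := by
    intro dec m i c x
    have hd : dec = instDecidableEqFin 3 := Subsingleton.elim _ _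
    subst hd
    fin_cases i <;>
      simp [Function.update_apply, Fin.ext_iff, map_add, map_smul, LinearMap.add_apply,
        LinearMap.smul_apply, smul_eq_mul] <;>
      module

lemma combo_apply (Bq : LinearMap.BilinForm ℂ V) (A : V →ₗ[ℂ] W) (m : Fin 3 → V) :
    combo Bq A m = (6:ℂ)⁻¹ • (Bq (m 0) (m 1) • A (m 2) + Bq (m 1) (m 2) • A (m 0)
      + Bq (m 0) (m 2) • A (m 1)) := by
  simp [combo]



end CubicAux


/-- Let `V` be a finite-dimensional complex vector space, `q : V → ℂ` a nondegenerate
quadratic form (i.e. with nondegenerate associated bilinear form), `W` a finite-dimensional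
complex vector space, `T : V × V × V → W` a symmetric trilinear map, and `C(x) = T(x,x,x)`.
If `C(x) = 0` for every `x` with `q(x) = 0`, then there is a `ℂ`-linear map `A : V → W`
with `C(x) = q(x)·A(x)` for all `x`. -/
theorem cubic_divisible_by_nondegenerate_quadratic
    {V : Type*} [AddCommGroup V] [Module ℂ V] [FiniteDimensional ℂ V]
    {W : Type*} [AddCommGroup W] [Module ℂ W] [FiniteDimensional ℂ W]
    (q : QuadraticForm ℂ V)
    (hq : q.polarBilin.Nondegenerate)
    (T : MultilinearMap ℂ (fun _ : Fin 3 => V) W)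
    (hTsymm : ∀ (σ : Equiv.Perm (Fin 3)) (v : Fin 3 → V), T (v ∘ σ) = T v)
    (hvanish : ∀ x : V, q x = 0 → T (fun _ => x) = 0) :
    ∃ A : V →ₗ[ℂ] W, ∀ x : V, T (fun _ => x) = q x • A x := by
    classical
  haveI : Invertible (2:ℂ) := invertibleOfNonzero two_ne_zero
  have hBsymm : q.polarBilin.IsSymm := by
    refine ⟨fun x y => ?_⟩
    simp only [RingHom.id_apply, QuadraticMap.polarBilin_apply_apply]
    exact QuadraticMap.polar_comm _ x y
  obtain ⟨v, hv⟩ := LinearMap.BilinForm.exists_orthogonal_basis hBsymm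
  -- the diagonal entries are nonzero
  have hvne : ∀ i, q (v i) ≠ 0 := by
    intro i h0
    have hzero : q.polarBilin (v i) = 0 := by
      refine v.ext fun j => ?_
      rcases eq_or_ne i j with rfl | hij
      · simp [QuadraticMap.polarBilin_apply_apply, QuadraticMap.polar_self, h0]
      · exact hv hij
    have : v i = 0 := by
      refine hq.1 (v i) fun y => ?_
      rw [hzero]; rfl
    exact v.ne_zero i this
  -- rescale to make q (e i) = 1
  choose z hz using fun i => IsAlgClosed.exists_pow_nat_eq (q (v i)) (n := 2) two_pos
  have hzne : ∀ i, z i ≠ 0 := by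
    intro i h0
    exact hvne i (by rw [← hz i, h0]; ring)
  have hw : ∀ i, IsUnit ((z i)⁻¹) := fun i => isUnit_iff_ne_zero.2 (inv_ne_zero (hzne i))
  set e := v.isUnitSMul hw with he
  have heapp : ∀ i, e i = (z i)⁻¹ • v i := fun i => v.isUnitSMul_apply hw i
  have hq1 : ∀ i, q (e i) = 1 := by
    intro i
    rw [heapp i, QuadraticMap.map_smul, smul_eq_mul, ← hz i]
    field_simp [hzne i]
  have hpolar : ∀ i j, i ≠ j → QuadraticMap.polar q (e i) (e j) = 0 := by
    intro i j hij
    rw [heapp i, heapp j, QuadraticMap.polar_smul_left, QuadraticMap.polar_smul_right]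
    have : QuadraticMap.polar q (v i) (v j) = 0 := hv hij
    rw [this, smul_zero, smul_zero]
  -- Claim 1: mixed terms with a repeated index
  have claim1 : ∀ i j, i ≠ j → CubicAux.t3 T (e i) (e i) (e j) = (3:ℂ)⁻¹ • CubicAux.t3 T (e j) (e j) (e j) := by
    intro i j hij
    have hiso : ∀ c : ℂ, c * c = -1 → q (e i + c • e j) = 0 := by
      intro c hc
      rw [QuadraticMap.map_add (⇑q) (e i) (c • e j), QuadraticMap.map_smul, smul_eq_mul, hc,
        QuadraticMap.polar_smul_right, hpolar i j hij, hq1, hq1]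
      simp
    have h1 : CubicAux.t3 T (e i) (e i) (e i) + (3*I) • CubicAux.t3 T (e i) (e i) (e j)
        + (3*I^2) • CubicAux.t3 T (e j) (e j) (e i) + I^3 • CubicAux.t3 T (e j) (e j) (e j)
        = 0 :=
      (CubicAux.cube_expand1 T hTsymm (e i) (e j) I).symm.trans
        (hvanish _ (hiso I Complex.I_mul_I))
    have h2 : CubicAux.t3 T (e i) (e i) (e i) + (3*(-I)) • CubicAux.t3 T (e i) (e i) (e j)
        + (3*(-I)^2) • CubicAux.t3 T (e j) (e j) (e i) + (-I)^3 • CubicAux.t3 T (e j) (e j) (e j)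
        = 0 :=
      (CubicAux.cube_expand1 T hTsymm (e i) (e j) (-I)).symm.trans
        (hvanish _ (hiso (-I) (by rw [neg_mul_neg, Complex.I_mul_I])))
    have hd : (6*I) • CubicAux.t3 T (e i) (e i) (e j) - (2*I) • CubicAux.t3 T (e j) (e j) (e j)
        = (CubicAux.t3 T (e i) (e i) (e i) + (3*I) • CubicAux.t3 T (e i) (e i) (e j)
            + (3*I^2) • CubicAux.t3 T (e j) (e j) (e i) + I^3 • CubicAux.t3 T (e j) (e j) (e j))
          - (CubicAux.t3 T (e i) (e i) (e i) + (3*(-I)) • CubicAux.t3 T (e i) (e i) (e j)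
            + (3*(-I)^2) • CubicAux.t3 T (e j) (e j) (e i)
            + (-I)^3 • CubicAux.t3 T (e j) (e j) (e j)) := by
      match_scalars <;>
        first
          | ring1
          | linear_combination (-2*Complex.I) * Complex.I_sq
    rw [h1, h2, sub_zero, sub_eq_zero] at hd
    have h2I : (2*I : ℂ) ≠ 0 := by simp [Complex.I_ne_zero]
    have hd' : (2*I) • ((3:ℂ) • CubicAux.t3 T (e i) (e i) (e j)) = (2*I) • CubicAux.t3 T (e j) (e j) (e j) := by
      rw [smul_smul]
      calc (2*I*3) • CubicAux.t3 T (e i) (e i) (e j)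
          = (6*I) • CubicAux.t3 T (e i) (e i) (e j) := by ring_nf
        _ = (2*I) • CubicAux.t3 T (e j) (e j) (e j) := hd
    have h3 : (3:ℂ) • CubicAux.t3 T (e i) (e i) (e j) = CubicAux.t3 T (e j) (e j) (e j) :=
      smul_right_injective W h2I hd'
    rw [← h3, smul_smul]
    norm_num
  -- Claim 2: terms with three distinct indices vanish
  have claim2 : ∀ i j k, i ≠ j → i ≠ k → j ≠ k →
      CubicAux.t3 T (e i) (e j) (e k) = 0 := by
    intro i j k hij hik hjk
    set c : ℂ := (Real.sqrt 2 : ℂ) * I with hcdef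
    have hc2 : c^2 = -2 := by
      rw [hcdef, mul_pow, Complex.I_sq, ← Complex.ofReal_pow,
        Real.sq_sqrt (by norm_num : (0:ℝ) ≤ 2)]
      norm_num
    have hc0 : c ≠ 0 := by
      refine mul_ne_zero ?_ Complex.I_ne_zero
      exact_mod_cast Real.sqrt_ne_zero'.mpr (by norm_num)
    have hcc : c * c = -2 := by rw [← pow_two]; exact hc2
    have hiso : q (e i + e j + c • e k) = 0 := by
      rw [QuadraticMap.map_add (⇑q) (e i + e j) (c • e k),
        QuadraticMap.map_add (⇑q) (e i) (e j),
        QuadraticMap.map_smul, smul_eq_mul, hcc,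
        QuadraticMap.polar_add_left, QuadraticMap.polar_smul_right,
        QuadraticMap.polar_smul_right,
        hpolar i j hij, hpolar i k hik, hpolar j k hjk, hq1, hq1, hq1]
      simp only [smul_zero, mul_one, add_zero, zero_mul, mul_zero]
      norm_num
    have h0 := (CubicAux.cube_expand2 T hTsymm (e i) (e j) (e k) c).symm.trans
      (hvanish _ hiso)
    rw [claim1 i j hij, claim1 j i hij.symm, claim1 i k hik, claim1 j k hjk,
      claim1 k i hik.symm, claim1 k j hjk.symm] at h0
    have hd : CubicAux.t3 T (e i) (e i) (e i)
          + (3:ℂ) • ((3:ℂ)⁻¹ • CubicAux.t3 T (e j) (e j) (e j))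
          + (3:ℂ) • ((3:ℂ)⁻¹ • CubicAux.t3 T (e i) (e i) (e i))
          + CubicAux.t3 T (e j) (e j) (e j)
          + (3*c) • ((3:ℂ)⁻¹ • CubicAux.t3 T (e k) (e k) (e k))
          + (3*c) • ((3:ℂ)⁻¹ • CubicAux.t3 T (e k) (e k) (e k))
          + (6*c) • CubicAux.t3 T (e i) (e j) (e k)
          + (3*c^2) • ((3:ℂ)⁻¹ • CubicAux.t3 T (e i) (e i) (e i))
          + (3*c^2) • ((3:ℂ)⁻¹ • CubicAux.t3 T (e j) (e j) (e j))
          + c^3 • CubicAux.t3 T (e k) (e k) (e k)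
        = (6*c) • CubicAux.t3 T (e i) (e j) (e k) := by
      match_scalars <;>
        first
          | ring1
          | linear_combination hc2
          | linear_combination c * hc2
    rw [h0] at hd
    rcases smul_eq_zero.mp hd.symm with h | h
    · exact absurd h (mul_ne_zero (by norm_num) hc0)
    · exact h
  -- the candidate linear map
  set A : V →ₗ[ℂ] W :=
    ∑ m, (e.coord m).smulRight (CubicAux.t3 T (e m) (e m) (e m)) with hA
  have hAe : ∀ m, A (e m) = CubicAux.t3 T (e m) (e m) (e m) := by
    intro m
    rw [hA]
    simp only [LinearMap.coe_sum, Finset.sum_apply, LinearMap.smulRight_apply,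
      Module.Basis.coord_apply, Module.Basis.repr_self, Finsupp.single_apply, ite_smul, one_smul, zero_smul]
    rw [Finset.sum_ite_eq Finset.univ m]
    simp
  have hB2 : ∀ m, q.polarBilin (e m) (e m) = 2 := by
    intro m
    rw [QuadraticMap.polarBilin_apply_apply, QuadraticMap.polar_self, hq1]
    norm_num
  have hB0 : ∀ m n, m ≠ n → q.polarBilin (e m) (e n) = 0 := by
    intro m n hmn
    rw [QuadraticMap.polarBilin_apply_apply]
    exact hpolar m n hmn
  have hTG : T = CubicAux.combo q.polarBilin A := by
    refine Module.Basis.ext_multilinear (fun _ => e) fun vv => ?_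
    have hfe : (fun i : Fin 3 => e (vv i)) = ![e (vv 0), e (vv 1), e (vv 2)] := by
      funext i; fin_cases i <;> rfl
    rw [hfe]
    show CubicAux.t3 T (e (vv 0)) (e (vv 1)) (e (vv 2)) =
      (6:ℂ)⁻¹ • (q.polarBilin (e (vv 0)) (e (vv 1)) • A (e (vv 2))
        + q.polarBilin (e (vv 1)) (e (vv 2)) • A (e (vv 0))
        + q.polarBilin (e (vv 0)) (e (vv 2)) • A (e (vv 1)))
    rcases eq_or_ne (vv 0) (vv 1) with h01 | h01
    · rcases eq_or_ne (vv 1) (vv 2) with h12 | h12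
      · -- all three indices equal
        rw [← h01, ← h12, ← h01, hB2, hAe]
        module
      · -- vv 0 = vv 1 ≠ vv 2
        rw [← h01] at h12 ⊢
        rw [hB2, hB0 _ _ h12, hAe, hAe, claim1 _ _ h12]
        module
    · rcases eq_or_ne (vv 1) (vv 2) with h12 | h12
      · -- vv 0 ≠ vv 1 = vv 2
        rw [← h12]
        rw [CubicAux.t3_yxx T hTsymm (e (vv 1)) (e (vv 0)), hB2, hB0 _ _ h01,
          hAe, hAe, claim1 _ _ (Ne.symm h01)]
        module
      · rcases eq_or_ne (vv 0) (vv 2) with h02 | h02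
        · -- vv 0 = vv 2 ≠ vv 1
          rw [← h02] at h12 ⊢
          rw [CubicAux.t3_xyx T hTsymm (e (vv 0)) (e (vv 1)), hB2, hB0 _ _ h01,
            hB0 _ _ h12, hAe, hAe, claim1 _ _ h01]
          module
        · -- all distinct
          rw [claim2 _ _ _ h01 h02 h12, hB0 _ _ h01, hB0 _ _ h12, hB0 _ _ h02]
          simp
  refine ⟨A, fun x => ?_⟩
  rw [hTG, CubicAux.combo_apply q.polarBilin A (fun _ => x)]
  have hBx : q.polarBilin x x = 2 * q x := by
    rw [QuadraticMap.polarBilin_apply_apply, QuadraticMap.polar_self, two_nsmul, ← two_mul]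
  show (6:ℂ)⁻¹ • (q.polarBilin x x • A x + q.polarBilin x x • A x + q.polarBilin x x • A x)
    = q x • A x
  rw [hBx]
  module
end
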